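/- (Lemma coc.var3) Let d ≥ 2, k ≥ 1, and for each 1 ≤ r ≤ k let π_{1r}, π_{2r} ∈ Ξ_d and integers n_{1r}, n_{2r} ≥ 2, with tr(Σ_{π_{ir}}²) > 0 for i = 1,2 and all r. Let λ_r = n_{1r}/(n_{1r}+n_{2r}) and b_r = 2/(n_{1r}(n_{1r}−1)) + 2/(n_{2r}(n_{2r}−1)) + 4/(n_{1r} n_{2r}). Define var_0(T_U) = (1/k) Σ_{r=1}^k [ 2/(n_{1r}(n_{1r}−1)) tr(Σ_{π_{1r}}²) + 2/(n_{2r}(n_{2r}−1)) tr(Σ_{π_{2r}}²) + 4/(n_{1r} n_{2r}) tr(Σ_{π_{1r}} Σ_{π_{2r}}) ]; var(T_U) = var_0(T_U) + (1/k) Σ_{r=1}^k [ (4/n_{1r}) (π_{1r}−π_{2r})ᵀ Σ_{π_{1r}} (π_{1r}−π_{2r}) + (4/n_{2r}) (π_{1r}−π_{2r})ᵀ Σ_{π_{2r}} (π_{1r}−π_{2r}) ]; var_{02}(T_U) = (1/k) Σ_{r=1}^k b_r tr[ ( λ_r Σ_{π_{1r}} + (1−λ_r) Σ_{π_{2r}}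 )² ]. Assume there exists M ≥ 1 such that max{ tr(Σ_{π_{1r}}²), tr(Σ_{π_{2r}}²) } ≤ M min{ tr(Σ_{π_{1r}}²), tr(Σ_{π_{2r}}²) } for all r. Then var_{02}(T_U) ≤ (M+1) var_0(T_U) ≤ (M+1) var(T_U); equivalently, 0 ≤ var_{02}(T_U)/var(T_U) ≤ var_{02}(T_U)/var_0(T_U) ≤ M+1. -/

import Mathlib

open Matrix

/-- For `π ∈ Ξ_d`, the multinomial covariance matrix `Σ_π = diag(π) − π πᵀ`. -/
noncomputable def covMatrix {d : ℕ} (π : Fin d → ℝ) : Matrix (Fin d) (Fin d) ℝ :=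
  Matrix.diagonal π - Matrix.vecMulVec π π

/-- tr(Σ_π²). -/
noncomputable def trsq {d : ℕ} (π : Fin d → ℝ) : ℝ :=
  Matrix.trace (covMatrix π * covMatrix π)

/-- tr(Σ_π Σ_ρ). -/
noncomputable def trprod {d : ℕ} (π ρ : Fin d → ℝ) : ℝ :=
  Matrix.trace (covMatrix π * covMatrix ρ)

/-- The quadratic form `vᵀ A v`. -/
noncomputable def qf {d : ℕ} (A : Matrix (Fin d) (Fin d) ℝ) (v : Fin d → ℝ) : ℝ :=
  dotProduct v (A.mulVec v)

/-- `b_r = 2/(n₁(n₁−1)) + 2/(n₂(n₂−1)) + 4/(n₁n₂)`. -/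
noncomputable def bcoef (n₁ n₂ : ℕ) : ℝ :=
  2 / ((n₁ : ℝ) * ((n₁ : ℝ) - 1)) + 2 / ((n₂ : ℝ) * ((n₂ : ℝ) - 1))
    + 4 / ((n₁ : ℝ) * (n₂ : ℝ))

/-- `var_0(T_U)`. -/
noncomputable def var0TU {d k : ℕ} (π₁ π₂ : Fin k → Fin d → ℝ) (n₁ n₂ : Fin k → ℕ) : ℝ :=
  (1 / (k : ℝ)) * ∑ r, (2 / ((n₁ r : ℝ) * ((n₁ r : ℝ) - 1)) * trsq (π₁ r)
    + 2 / ((n₂ r : ℝ) * ((n₂ r : ℝ) - 1)) * trsq (π₂ r)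
    + 4 / ((n₁ r : ℝ) * (n₂ r : ℝ)) * trprod (π₁ r) (π₂ r))

/-- `var(T_U)`. -/
noncomputable def varTU {d k : ℕ} (π₁ π₂ : Fin k → Fin d → ℝ) (n₁ n₂ : Fin k → ℕ) : ℝ :=
  var0TU π₁ π₂ n₁ n₂ + (1 / (k : ℝ)) *
    ∑ r, (4 / (n₁ r : ℝ) * qf (covMatrix (π₁ r)) (π₁ r - π₂ r)
      + 4 / (n₂ r : ℝ) * qf (covMatrix (π₂ r)) (π₁ r - π₂ r))

/-- `var_{02}(T_U)` with `λ_r = n₁_r/(n₁_r + n₂_r)`. -/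
noncomputable def var02TU {d k : ℕ} (π₁ π₂ : Fin k → Fin d → ℝ) (n₁ n₂ : Fin k → ℕ) : ℝ :=
  (1 / (k : ℝ)) * ∑ r, bcoef (n₁ r) (n₂ r) *
    Matrix.trace
      ((((n₁ r : ℝ) / ((n₁ r : ℝ) + (n₂ r : ℝ))) • covMatrix (π₁ r)
          + (1 - (n₁ r : ℝ) / ((n₁ r : ℝ) + (n₂ r : ℝ))) • covMatrix (π₂ r)) *
        (((n₁ r : ℝ) / ((n₁ r : ℝ) + (n₂ r : ℝ))) • covMatrix (π₁ r)
          + (1 - (n₁ r : ℝ) / ((n₁ r : ℝ) + (n₂ r : ℝ))) • covMatrix (π₂ r)))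

section CocAux

lemma coeff_key (x y : ℝ) (hx : 2 ≤ x) (hy : 2 ≤ y) :
    (x/(x+y))^2 * (4/(x*y)) ≤ (1 - (x/(x+y))^2) * (2/(x*(x-1)) + 2/(y*(y-1))) := by
  have hx0 : (0:ℝ) < x := by linarith
  have hy0 : (0:ℝ) < y := by linarith
  have hx1 : (0:ℝ) < x - 1 := by linarith
  have hy1 : (0:ℝ) < y - 1 := by linarith
  have hxy : (0:ℝ) < x + y := by linarith
  rw [← sub_nonneg]
  have key : (1 - (x/(x+y))^2) * (2/(x*(x-1)) + 2/(y*(y-1))) - (x/(x+y))^2 * (4/(x*y))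
      = (2*y^3*(y-1) + 4*x^2*(x-1) + 2*x*y^2*(x+2*y-3))
        / ((x+y)^2 * (x*(x-1)) * (y*(y-1))) := by
    field_simp
    ring
  rw [key]
  have h1 : (0:ℝ) ≤ 2*y^3*(y-1) := by
    have := pow_nonneg hy0.le 3; nlinarith
  have h2 : (0:ℝ) ≤ 4*x^2*(x-1) := by nlinarith [sq_nonneg x]
  have h3 : (0:ℝ) ≤ 2*x*y^2*(x+2*y-3) := by
    have h4 : (0:ℝ) ≤ x+2*y-3 := by linarith
    have h5 : (0:ℝ) ≤ 2*x*y^2 := by positivity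
    nlinarith
  have hden : (0:ℝ) ≤ (x+y)^2 * (x*(x-1)) * (y*(y-1)) :=
    mul_nonneg (mul_nonneg (sq_nonneg _) (mul_nonneg hx0.le hx1.le))
      (mul_nonneg hy0.le hy1.le)
  exact div_nonneg (by linarith) hden

lemma coeff_cross (x y : ℝ) (hx : 2 ≤ x) (hy : 2 ≤ y) :
    (2/(x*(x-1)) + 2/(y*(y-1)) + 4/(x*y)) * ((x/(x+y)) * (y/(x+y))) ≤ 4/(x*y) := by
  have hx0 : (0:ℝ) < x := by linarith
  have hy0 : (0:ℝ) < y := by linarith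
  have hx1 : (0:ℝ) < x - 1 := by linarith
  have hy1 : (0:ℝ) < y - 1 := by linarith
  have hxy : (0:ℝ) < x + y := by linarith
  rw [← sub_nonneg]
  have key : 4/(x*y) - (2/(x*(x-1)) + 2/(y*(y-1)) + 4/(x*y)) * ((x/(x+y)) * (y/(x+y)))
      = (2 * ((x*y)*((x+y)^2+3*(x+y)-2) - 2*(x+y)^3 + 2*(x+y)^2))
        / ((x+y)^2 * (x*(x-1)) * (y*(y-1))) := by
    field_simp
    ring
  rw [key]
  have hden : (0:ℝ) ≤ (x+y)^2 * (x*(x-1)) * (y*(y-1)) :=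
    mul_nonneg (mul_nonneg (sq_nonneg _) (mul_nonneg hx0.le hx1.le))
      (mul_nonneg hy0.le hy1.le)
  have hpq : 0 ≤ (x-2)*(y-2) := mul_nonneg (by linarith) (by linarith)
  have hs : (4:ℝ) ≤ x + y := by linarith
  have hq : (0:ℝ) ≤ (x+y)^2+3*(x+y)-2 := by nlinarith
  have hnum : (0:ℝ) ≤ 2 * ((x*y)*((x+y)^2+3*(x+y)-2) - 2*(x+y)^3 + 2*(x+y)^2) := by
    nlinarith [mul_nonneg hpq hq,
      mul_nonneg (show (0:ℝ) ≤ x+y-4 by linarith) (show (0:ℝ) ≤ x+y by linarith)]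
  exact div_nonneg hnum hden

lemma term_ineq (a c p α β γ s t M : ℝ)
    (ha : 0 ≤ a) (hc : 0 ≤ c) (hp : 0 ≤ p)
    (hγ : 0 ≤ γ) (hM : 1 ≤ M)
    (hca : c ≤ M*a) (hac : a ≤ M*c)
    (hα : 0 ≤ α) (hβ : 0 ≤ β)
    (h1 : (α+β+γ)*s^2 ≤ α+β) (h2 : (α+β+γ)*t^2 ≤ α+β)
    (h3 : (α+β+γ)*(s*t) ≤ γ) :
    (α+β+γ)*(s^2*a + 2*(s*t)*p + t^2*c) ≤ (M+1)*(α*a + β*c + γ*p) := by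
  have f1 := mul_le_mul_of_nonneg_right h1 ha
  have f2 := mul_le_mul_of_nonneg_right h2 hc
  have f3 := mul_le_mul_of_nonneg_right h3 hp
  have f4 := mul_le_mul_of_nonneg_left hac hβ
  have f5 := mul_le_mul_of_nonneg_left hca hα
  have f6 : γ*p ≤ M*(γ*p) := le_mul_of_one_le_left (mul_nonneg hγ hp) hM
  nlinarith [f1, f2, f3, f4, f5, f6]

lemma covMatrix_posSemidef {d : ℕ} (π : Fin d → ℝ)
    (h0 : ∀ j, 0 ≤ π j) (h1 : ∑ j, π j = 1) : (covMatrix π).PosSemidef := by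
  refine Matrix.PosSemidef.of_dotProduct_mulVec_nonneg ?_ ?_
  · ext i j
    simp only [covMatrix, Matrix.conjTranspose_apply, Matrix.sub_apply,
      Matrix.vecMulVec_apply, Matrix.diagonal_apply, star_trivial]
    by_cases h : i = j
    · simp [h, mul_comm]
    · simp [h, mul_comm]
      exact fun hji => absurd hji.symm h
  · intro x
    have hx : star x = x := by simp
    rw [hx]
    have e1 : dotProduct x ((Matrix.diagonal π).mulVec x) = ∑ j, π j * x j ^ 2 := by
      simp [dotProduct, Matrix.mulVec_diagonal]
      exact Finset.sum_congr rfl fun j _ => by ring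
    have e2 : dotProduct x ((Matrix.vecMulVec π π).mulVec x)
        = (∑ j, π j * x j) * (∑ j, π j * x j) := by
      simp only [dotProduct, Matrix.mulVec, Matrix.vecMulVec_apply,
        Finset.sum_mul, Finset.mul_sum]
      refine Finset.sum_congr rfl fun i _ => Finset.sum_congr rfl fun j _ => by ring
    have expand : dotProduct x ((covMatrix π).mulVec x)
        = (∑ j, π j * x j ^ 2) - (∑ j, π j * x j) ^ 2 := by
      simp only [covMatrix, Matrix.sub_mulVec, dotProduct_sub, e1, e2, pow_two]
    have cs := Finset.sum_mul_sq_le_sq_mul_sq Finset.univ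
      (fun j => Real.sqrt (π j)) (fun j => Real.sqrt (π j) * x j)
    have hfg : ∀ j, Real.sqrt (π j) * (Real.sqrt (π j) * x j) = π j * x j := by
      intro j; rw [← mul_assoc, Real.mul_self_sqrt (h0 j)]
    have hf2 : ∀ j, Real.sqrt (π j) ^ 2 = π j := fun j => Real.sq_sqrt (h0 j)
    have hg2 : ∀ j, (Real.sqrt (π j) * x j) ^ 2 = π j * x j ^ 2 := by
      intro j; rw [mul_pow, hf2]
    rw [Finset.sum_congr rfl (fun j _ => hfg j), Finset.sum_congr rfl (fun j _ => hf2 j),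
      Finset.sum_congr rfl (fun j _ => hg2 j), h1, one_mul] at cs
    rw [expand]
    linarith

lemma psd_trace_nonneg {d : ℕ} {A : Matrix (Fin d) (Fin d) ℝ} (hA : A.PosSemidef) :
    0 ≤ A.trace := by
  rw [Matrix.trace]
  refine Finset.sum_nonneg fun i _ => ?_
  have h := hA.dotProduct_mulVec_nonneg (Pi.single i 1)
  simpa [dotProduct, Matrix.mulVec, Pi.single_apply] using h

lemma trace_mul_psd_nonneg {d : ℕ} {A B : Matrix (Fin d) (Fin d) ℝ}
    (hA : A.PosSemidef) (hB : B.PosSemidef) : 0 ≤ (A * B).trace := by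
  obtain ⟨S, hS⟩ : ∃ S : Matrix (Fin d) (Fin d) ℝ, A = star S * S := by
    open scoped MatrixOrder in
    exact CStarAlgebra.nonneg_iff_eq_star_mul_self.mp hA.nonneg
  rw [hS, Matrix.mul_assoc, Matrix.trace_mul_comm, Matrix.star_eq_conjTranspose]
  exact psd_trace_nonneg (hB.mul_mul_conjTranspose_same S)

lemma trace_sq_expand {d : ℕ} (A B : Matrix (Fin d) (Fin d) ℝ) (s t : ℝ) :
    ((s•A + t•B) * (s•A + t•B)).trace
      = s^2*(A*A).trace + 2*(s*t)*(A*B).trace + t^2*(B*B).trace := by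
  have h := Matrix.trace_mul_comm B A
  simp only [add_mul, mul_add, Matrix.smul_mul, Matrix.mul_smul, Matrix.trace_add,
    Matrix.trace_smul, smul_smul, smul_eq_mul]
  rw [h]; ring

end CocAux

set_option maxHeartbeats 1000000 in
/-- Lemma coc.var3: `var_{02}(T_U) ≤ (M+1) var_0(T_U) ≤ (M+1) var(T_U)`. -/
theorem stmt_12 {d k : ℕ} (hd : 2 ≤ d) (hk : 1 ≤ k)
    (π₁ π₂ : Fin k → Fin d → ℝ) (n₁ n₂ : Fin k → ℕ)
    (hΞ₁ : ∀ r, (∀ j, 0 ≤ π₁ r j) ∧ ∑ j, π₁ r j = 1)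
    (hΞ₂ : ∀ r, (∀ j, 0 ≤ π₂ r j) ∧ ∑ j, π₂ r j = 1)
    (hn₁ : ∀ r, 2 ≤ n₁ r) (hn₂ : ∀ r, 2 ≤ n₂ r)
    (htr : ∀ r, 0 < trsq (π₁ r) ∧ 0 < trsq (π₂ r))
    (M : ℝ) (hM : 1 ≤ M)
    (hMbd : ∀ r, max (trsq (π₁ r)) (trsq (π₂ r))
        ≤ M * min (trsq (π₁ r)) (trsq (π₂ r))) :
    var02TU π₁ π₂ n₁ n₂ ≤ (M + 1) * var0TU π₁ π₂ n₁ n₂ ∧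
      (M + 1) * var0TU π₁ π₂ n₁ n₂ ≤ (M + 1) * varTU π₁ π₂ n₁ n₂ := by
  have hkpos : (0:ℝ) ≤ 1 / (k:ℝ) := by positivity
  constructor
  · -- var02 ≤ (M+1) var0
    have hterm : ∀ r : Fin k,
        bcoef (n₁ r) (n₂ r) * Matrix.trace
          ((((n₁ r : ℝ) / ((n₁ r : ℝ) + (n₂ r : ℝ))) • covMatrix (π₁ r)
              + (1 - (n₁ r : ℝ) / ((n₁ r : ℝ) + (n₂ r : ℝ))) • covMatrix (π₂ r)) *
            (((n₁ r : ℝ) / ((n₁ r : ℝ) + (n₂ r : ℝ))) • covMatrix (π₁ r)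
              + (1 - (n₁ r : ℝ) / ((n₁ r : ℝ) + (n₂ r : ℝ))) • covMatrix (π₂ r)))
        ≤ (M+1) * (2 / ((n₁ r : ℝ) * ((n₁ r : ℝ) - 1)) * trsq (π₁ r)
            + 2 / ((n₂ r : ℝ) * ((n₂ r : ℝ) - 1)) * trsq (π₂ r)
            + 4 / ((n₁ r : ℝ) * (n₂ r : ℝ)) * trprod (π₁ r) (π₂ r)) := by
      intro r
      set x := (n₁ r : ℝ) with hxdef
      set y := (n₂ r : ℝ) with hydef
      have hx : (2:ℝ) ≤ x := by rw [hxdef]; exact_mod_cast hn₁ r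
      have hy : (2:ℝ) ≤ y := by rw [hydef]; exact_mod_cast hn₂ r
      have hxy : (0:ℝ) < x + y := by linarith
      have hA := covMatrix_posSemidef (π₁ r) (hΞ₁ r).1 (hΞ₁ r).2
      have hB := covMatrix_posSemidef (π₂ r) (hΞ₂ r).1 (hΞ₂ r).2
      have ha : 0 ≤ trsq (π₁ r) := (htr r).1.le
      have hc : 0 ≤ trsq (π₂ r) := (htr r).2.le
      have hp : 0 ≤ trprod (π₁ r) (π₂ r) := trace_mul_psd_nonneg hA hB
      have hM0 : (0:ℝ) ≤ M := by linarith
      have hca : trsq (π₂ r) ≤ M * trsq (π₁ r) :=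
        le_trans (le_max_right _ _) (le_trans (hMbd r)
          (mul_le_mul_of_nonneg_left (min_le_left _ _) hM0))
      have hac : trsq (π₁ r) ≤ M * trsq (π₂ r) :=
        le_trans (le_max_left _ _) (le_trans (hMbd r)
          (mul_le_mul_of_nonneg_left (min_le_right _ _) hM0))
      have ht : 1 - x/(x+y) = y/(x+y) := by field_simp; ring
      have key1 := coeff_key x y hx hy
      have hs2 : (2/(x*(x-1)) + 2/(y*(y-1)) + 4/(x*y)) * (x/(x+y))^2
          ≤ 2/(x*(x-1)) + 2/(y*(y-1)) := by linarith [key1]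
      have key2 := coeff_key y x hy hx
      rw [show y + x = x + y from add_comm y x, show y*x = x*y from mul_comm y x] at key2
      have ht2 : (2/(x*(x-1)) + 2/(y*(y-1)) + 4/(x*y)) * (1 - x/(x+y))^2
          ≤ 2/(x*(x-1)) + 2/(y*(y-1)) := by
        rw [ht]; linarith [key2]
      have hst : (2/(x*(x-1)) + 2/(y*(y-1)) + 4/(x*y)) * ((x/(x+y)) * (1 - x/(x+y)))
          ≤ 4/(x*y) := by
        rw [ht]; exact coeff_cross x y hx hy
      have hα : (0:ℝ) ≤ 2/(x*(x-1)) := by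
        apply div_nonneg (by norm_num); nlinarith
      have hβ : (0:ℝ) ≤ 2/(y*(y-1)) := by
        apply div_nonneg (by norm_num); nlinarith
      have hγ : (0:ℝ) ≤ 4/(x*y) := by
        apply div_nonneg (by norm_num); nlinarith
      have main := term_ineq (trsq (π₁ r)) (trsq (π₂ r)) (trprod (π₁ r) (π₂ r))
        (2/(x*(x-1))) (2/(y*(y-1))) (4/(x*y)) (x/(x+y)) (1 - x/(x+y)) M
        ha hc hp hγ hM hca hac hα hβ hs2 ht2 hst
      rw [trace_sq_expand]
      have hb : bcoef (n₁ r) (n₂ r) = 2/(x*(x-1)) + 2/(y*(y-1)) + 4/(x*y) := rfl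
      rw [hb]
      have e1 : (covMatrix (π₁ r) * covMatrix (π₁ r)).trace = trsq (π₁ r) := rfl
      have e2 : (covMatrix (π₂ r) * covMatrix (π₂ r)).trace = trsq (π₂ r) := rfl
      have e3 : (covMatrix (π₁ r) * covMatrix (π₂ r)).trace = trprod (π₁ r) (π₂ r) := rfl
      rw [e1, e2, e3]
      linarith [main]
    have hsum := Finset.sum_le_sum (fun r (_ : r ∈ Finset.univ) => hterm r)
    have h1 : var02TU π₁ π₂ n₁ n₂ ≤ (1/(k:ℝ)) *
        ∑ r, (M+1) * (2 / ((n₁ r : ℝ) * ((n₁ r : ℝ) - 1)) * trsq (π₁ r)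
            + 2 / ((n₂ r : ℝ) * ((n₂ r : ℝ) - 1)) * trsq (π₂ r)
            + 4 / ((n₁ r : ℝ) * (n₂ r : ℝ)) * trprod (π₁ r) (π₂ r)) := by
      unfold var02TU
      exact mul_le_mul_of_nonneg_left hsum hkpos
    have h2 : (1/(k:ℝ)) *
        ∑ r, (M+1) * (2 / ((n₁ r : ℝ) * ((n₁ r : ℝ) - 1)) * trsq (π₁ r)
            + 2 / ((n₂ r : ℝ) * ((n₂ r : ℝ) - 1)) * trsq (π₂ r)
            + 4 / ((n₁ r : ℝ) * (n₂ r : ℝ)) * trprod (π₁ r) (π₂ r))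
        = (M+1) * var0TU π₁ π₂ n₁ n₂ := by
      unfold var0TU
      rw [← Finset.mul_sum]
      ring
    linarith [h1, h2.le]
  · -- (M+1) var0 ≤ (M+1) var
    have hq : ∀ r : Fin k, 0 ≤ 4 / (n₁ r : ℝ) * qf (covMatrix (π₁ r)) (π₁ r - π₂ r)
        + 4 / (n₂ r : ℝ) * qf (covMatrix (π₂ r)) (π₁ r - π₂ r) := by
      intro r
      have h1 := (covMatrix_posSemidef (π₁ r) (hΞ₁ r).1 (hΞ₁ r).2).dotProduct_mulVec_nonneg (π₁ r - π₂ r)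
      have h2 := (covMatrix_posSemidef (π₂ r) (hΞ₂ r).1 (hΞ₂ r).2).dotProduct_mulVec_nonneg (π₁ r - π₂ r)
      have h1' : 0 ≤ qf (covMatrix (π₁ r)) (π₁ r - π₂ r) := by simpa [qf] using h1
      have h2' : 0 ≤ qf (covMatrix (π₂ r)) (π₁ r - π₂ r) := by simpa [qf] using h2
      have c1 : (0:ℝ) ≤ 4 / (n₁ r : ℝ) := by positivity
      have c2 : (0:ℝ) ≤ 4 / (n₂ r : ℝ) := by positivity
      exact add_nonneg (mul_nonneg c1 h1') (mul_nonneg c2 h2')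
    have hextra : 0 ≤ (1/(k:ℝ)) *
        ∑ r, (4 / (n₁ r : ℝ) * qf (covMatrix (π₁ r)) (π₁ r - π₂ r)
          + 4 / (n₂ r : ℝ) * qf (covMatrix (π₂ r)) (π₁ r - π₂ r)) :=
      mul_nonneg hkpos (Finset.sum_nonneg fun r _ => hq r)
    have : var0TU π₁ π₂ n₁ n₂ ≤ varTU π₁ π₂ n₁ n₂ := by
      unfold varTU; linarith
    exact mul_le_mul_of_nonneg_left this (by linarith)
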